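/- arXiv:1905.10686 — 3 statements merged into one kernel-verified Lean document; each statement's English description precedes it below -/
import Mathlib

section
/- For all d ≥ 1, s ∈ (0,1], and m ≥ 1 there exist points x₁†, …, x_K† ∈ ℝ^d with K := (m+1)^d such that: for every choice of points x₁*, …, x_m* ∈ [-1,1]^d there exists ℓ ∈ {1,…,K} such that the cubic partition of ℝ^d of width s with offset x_ℓ† satisfies x_i* + t·B_∞ ⊂ B(x_i*) for every i = 1,…,m and every t with 0 < t ≤ s/(3m+3), where B(x_i*) denotes the unique cell of this cubic partition containing x_i*. -/
open MeasureTheory ENNReal Filter Set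
open scoped Classical

noncomputable section

namespace Pantry

abbrev E (d : ℕ) := Fin d → ℝ

/-- The input space `X = [-1,1]^d`. -/
def Xcube (d : ℕ) : Set (E d) := Set.Icc (fun _ => -1) (fun _ => 1)

/-- The closed `ℓ^∞`-ball `x + t·B_∞`. -/
def linfBall {d : ℕ} (x : E d) (t : ℝ) : Set (E d) :=
  Set.Icc (fun i => x i - t) (fun i => x i + t)

/-- sign with `sign 0 = 1`. -/
def sgn (t : ℝ) : ℝ := if t < 0 then -1 else 1

/-- Least squares loss. -/
def Lls (y t : ℝ) : ℝ := (y - t) ^ 2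

/-- Hinge loss. -/
def Lhinge (y t : ℝ) : ℝ := max 0 (1 - t * y)

/-- Classification loss. -/
def Lclass (y t : ℝ) : ℝ := if y * sgn t ≤ 0 then 1 else 0

/-- Risk of a predictor. -/
def Risk {d : ℕ} (L : ℝ → ℝ → ℝ) (P : Measure (E d × ℝ)) (f : E d → ℝ) : ℝ :=
  ∫ p, L p.2 (f p.1) ∂P

/-- Bayes risk: infimum of the risk over measurable predictors. -/
def BayesRisk {d : ℕ} (L : ℝ → ℝ → ℝ) (P : Measure (E d × ℝ)) : ℝ :=
  ⨅ f : {f : E d → ℝ // Measurable f}, Risk L P f.1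

/-- Empirical risk. -/
def EmpRisk {d n : ℕ} (L : ℝ → ℝ → ℝ) (D : Fin n → E d × ℝ) (f : E d → ℝ) : ℝ :=
  (1 / (n : ℝ)) * ∑ i, L (D i).2 (f (D i).1)

/-- `f` interpolates the data set `D`. -/
def Interpolates {d n : ℕ} (L : ℝ → ℝ → ℝ) (D : Fin n → E d × ℝ) (f : E d → ℝ) : Prop :=
  EmpRisk L D f = ⨅ g : E d → ℝ, EmpRisk L D g

/-- Assumption (A): `P_X(x + t·B_∞) ≤ c·t`. -/
def AssumptionA {d : ℕ} (P : Measure (E d × ℝ)) (c : ℝ) : Prop :=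
  0 < c ∧ ∀ t : ℝ, 0 ≤ t → ∀ x ∈ Xcube d,
    P.map Prod.fst (linfBall x t) ≤ ENNReal.ofReal (c * t)

/-- The `n`-fold product measure `P^n`. -/
def Pn {d : ℕ} (P : Measure (E d × ℝ)) (n : ℕ) : Measure (Fin n → E d × ℝ) :=
  Measure.pi fun _ => P

/-- `P` is supported on `X × Y`. -/
def SuppXY {d : ℕ} (P : Measure (E d × ℝ)) (Y : Set ℝ) : Prop :=
  ∀ᵐ p ∂P, p.1 ∈ Xcube d ∧ p.2 ∈ Y

/-- Squared `L²(P_X)`-distance. -/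
def L2sq {d : ℕ} (P : Measure (E d × ℝ)) (f g : E d → ℝ) : ℝ :=
  ∫ x, (f x - g x) ^ 2 ∂(P.map Prod.fst)

/-- Lower-left corner of the cell of the cubic partition (offset `off`, width `s`)
containing `x`. -/
def cellLo {d : ℕ} (off : E d) (s : ℝ) (x : E d) : E d :=
  fun i => off i + s * (⌊(x i - off i) / s⌋ : ℝ)

/-- The cell `B(x)` of the cubic partition of width `s` and offset `off` containing `x`. -/
def cell {d : ℕ} (off : E d) (s : ℝ) (x : E d) : Set (E d) :=
  { z | ∀ i, cellLo off s x i ≤ z i ∧ z i < cellLo off s x i + s }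

/-- A function is constant on each cell of the cubic partition. -/
def ConstOnCells {d : ℕ} (off : E d) (s : ℝ) (h : E d → ℝ) : Prop :=
  ∀ x z : E d, z ∈ cell off s x → h z = h x

/-- The hypotheses class `H_A` of `Y`-valued histograms for the cubic partition with
offset `off` and width `s`. -/
def Hist {d : ℕ} (off : E d) (s : ℝ) (Y : Set ℝ) : Set (E d → ℝ) :=
  { h | ConstOnCells off s h ∧ ∀ x, h x ∈ Y }

/-- Indices of data points falling in the cell of `x`. -/
def dataCell {d n : ℕ} (off : E d) (s : ℝ) (D : Fin n → E d × ℝ) (x : E d) : Finset (Fin n) :=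
  Finset.univ.filter (fun i => (D i).1 ∈ cell off s x)

/-- `h` is an empirical histogram rule for regression (HRR): a `[-1,1]`-valued histogram
given by label averages on non-empty cells. -/
def IsHRR {d n : ℕ} (off : E d) (s : ℝ) (D : Fin n → E d × ℝ) (h : E d → ℝ) : Prop :=
  h ∈ Hist off s (Set.Icc (-1 : ℝ) 1) ∧
  ∀ x : E d, 0 < (dataCell off s D x).card →
    h x = (∑ i ∈ dataCell off s D x, (D i).2) / ((dataCell off s D x).card : ℝ)

/-- `ε`-covering number of a class of functions w.r.t. the sup-norm on `X`. -/
def covNum {d : ℕ} (H : Set (E d → ℝ)) (ε : ℝ) : ℝ :=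
  sInf { r : ℝ | ∃ G : Finset (E d → ℝ), r = (G.card : ℝ) ∧
    ∀ h ∈ H, ∃ g ∈ G, ∀ x ∈ Xcube d, |h x - g x| ≤ ε }

/-- `R*_{L_ls,P,H_A}`: the smallest risk over the histogram class. -/
def HistBayes {d : ℕ} (P : Measure (E d × ℝ)) (off : E d) (s : ℝ) : ℝ :=
  ⨅ h : (Hist off s (Set.Icc (-1 : ℝ) 1)), Risk Lls P h.1

/-- ReLU. -/
def relu (t : ℝ) : ℝ := max 0 t

/-- ReLU networks with two hidden layers of widths `p₁`, `p₂`. -/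
def NN2 (d p₁ p₂ : ℕ) : Set (E d → ℝ) :=
  { f | ∃ (A1 : Fin p₁ → E d) (b1 : Fin p₁ → ℝ) (A2 : Fin p₂ → Fin p₁ → ℝ)
        (b2 : Fin p₂ → ℝ) (a : Fin p₂ → ℝ) (b : ℝ),
      f = fun x =>
        (∑ j, a j * relu ((∑ i, A2 j i * relu ((∑ k, A1 i k * x k) + b1 i)) + b2 j)) + b }

/-- ReLU networks with hidden widths given by the list `ks`, input dimension `m`,
scalar output without final activation. -/
def NNAux : (m : ℕ) → List ℕ → Set ((Fin m → ℝ) → ℝ)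
  | m, [] => { f | ∃ (a : Fin m → ℝ) (b : ℝ), f = fun x => (∑ i, a i * x i) + b }
  | m, k :: ks => { f | ∃ (A : Fin k → Fin m → ℝ) (bv : Fin k → ℝ),
      ∃ g ∈ NNAux k ks, f = fun x => g (fun j => relu ((∑ i, A j i * x i) + bv j)) }

/-- The ReLU bump approximating the indicator of `[z1, z2]` with accuracy `ρ`. -/
def bump {d : ℕ} (z1 z2 : E d) (ρ : ℝ) (x : E d) : ℝ :=
  relu ((∑ i, (1 - relu ((z1 i + ρ - x i) / ρ) - relu ((x i - z2 i + ρ) / ρ))) - (d : ℝ) + 1)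

/-- The `ε`-approximate histogram part: each cell indicator replaced by its `ε`-bump,
restricted to the cell. -/
def histEps {d : ℕ} (off : E d) (s ε : ℝ) (cfun : E d → ℝ) (x : E d) : ℝ :=
  cfun x * bump (cellLo off s x) (fun i => cellLo off s x i + s) ε x

/-- Data indices sharing the input `x`. -/
def sameX {d n : ℕ} (D : Fin n → E d × ℝ) (x : E d) : Finset (Fin n) :=
  Finset.univ.filter (fun k => (D k).1 = x)

/-- The loss `L` is interpolatable for `D`. -/
def Interpolatable {d n : ℕ} (L : ℝ → ℝ → ℝ) (Y : Set ℝ) (D : Fin n → E d × ℝ) : Prop :=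
  ∃ f : E d → ℝ, (∀ x ∈ Xcube d, f x ∈ Y) ∧
    ∀ i : Fin n, (∑ k ∈ sameX D (D i).1, L (D k).2 (f (D i).1)) =
      ⨅ c : ℝ, ∑ k ∈ sameX D (D i).1, L (D k).2 c

/-- Empirical risk for a general (input-dependent) loss. -/
def EmpRiskG {γ : Type*} {n : ℕ} (ℓ : γ → ℝ → ℝ → ℝ) (D : Fin n → γ × ℝ) (f : γ → ℝ) : ℝ :=
  (1 / (n : ℝ)) * ∑ i, ℓ (D i).1 (D i).2 (f (D i).1)

/-- Risk for a general (input-dependent) loss. -/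
def RiskG {γ : Type*} [MeasurableSpace γ] (ℓ : γ → ℝ → ℝ → ℝ) (P : Measure (γ × ℝ))
    (f : γ → ℝ) : ℝ :=
  ∫ p, ℓ p.1 p.2 (f p.1) ∂P

/-- Bayes risk for a general loss. -/
def BayesRiskG {γ : Type*} [MeasurableSpace γ] (ℓ : γ → ℝ → ℝ → ℝ)
    (P : Measure (γ × ℝ)) : ℝ :=
  ⨅ f : {f : γ → ℝ // Measurable f}, RiskG ℓ P f.1

/-- Number of data points in the cell `parts j`. -/
def Nj {γ : Type*} {m n : ℕ} (parts : Fin m → Set γ) (D : Fin n → γ × ℝ) (j : Fin m) : ℕ :=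
  (Finset.univ.filter (fun i => (D i).1 ∈ parts j)).card

/-- Sum of labels of data points in the cell `parts j`. -/
def Sj {γ : Type*} {m n : ℕ} (parts : Fin m → Set γ) (D : Fin n → γ × ℝ) (j : Fin m) : ℝ :=
  ∑ i ∈ Finset.univ.filter (fun i => (D i).1 ∈ parts j), (D i).2

/-- Marginal distribution on the input space. -/
def PX {d : ℕ} (P : Measure (E d × ℝ)) : Measure (E d) := P.map Prod.fst

/-- Infinite-sample histogram `h_{P,A}`. -/
def hPA {d : ℕ} (P : Measure (E d × ℝ)) (off : E d) (s : ℝ) (fstar : E d → ℝ) (x : E d) : ℝ :=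
  if PX P (cell off s x) ≠ 0
  then (∫ z in cell off s x, fstar z ∂(PX P)) / (PX P (cell off s x)).toReal
  else 0

-- auxiliary lemmas

lemma near_int (y δ : ℝ) (h : Int.fract y ≤ δ ∨ 1 - δ ≤ Int.fract y) :
    ∃ n : ℤ, |y - n| ≤ δ := by
  rcases h with h | h
  · refine ⟨⌊y⌋, ?_⟩
    rw [abs_of_nonneg (by simpa using Int.fract_nonneg y)]
    simpa [Int.self_sub_floor] using h
  · refine ⟨⌊y⌋ + 1, ?_⟩
    have h1 : Int.fract y < 1 := Int.fract_lt_one y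
    have h2 : y - ⌊y⌋ = Int.fract y := Int.self_sub_floor y
    rw [abs_of_nonpos (by push_cast; linarith)]
    push_cast
    linarith

lemma exists_good_shift (m : ℕ) (u : Fin m → ℝ) :
    ∃ k : Fin (m + 1), ∀ i : Fin m,
      1 / (3 * (m : ℝ) + 3) < Int.fract (u i - (k : ℝ) / ((m : ℝ) + 1)) ∧
      Int.fract (u i - (k : ℝ) / ((m : ℝ) + 1)) < 1 - 1 / (3 * (m : ℝ) + 3) := by
  set δ : ℝ := 1 / (3 * (m : ℝ) + 3) with hδ
  by_contra hcon
  push_neg at hcon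
  have hbad : ∀ k : Fin (m + 1), ∃ i : Fin m,
      Int.fract (u i - (k : ℝ) / ((m : ℝ) + 1)) ≤ δ ∨
      1 - δ ≤ Int.fract (u i - (k : ℝ) / ((m : ℝ) + 1)) := by
    intro k
    obtain ⟨i, hi⟩ := hcon k
    by_cases h : δ < Int.fract (u i - (k : ℝ) / ((m : ℝ) + 1))
    · exact ⟨i, Or.inr (hi h)⟩
    · exact ⟨i, Or.inl (le_of_not_gt h)⟩
  choose w hw using hbad
  have hm1 : (0:ℝ) < (m : ℝ) + 1 := by positivity
  have hinj : Function.Injective w := by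
    intro k k' hkk
    obtain ⟨n, hn⟩ := near_int _ _ (hw k)
    obtain ⟨n', hn'⟩ := near_int _ _ (hkk ▸ hw k')
    have key : |((k' : ℝ) - k) / ((m : ℝ) + 1) - ((n : ℝ) - n')| ≤ 2 * δ := by
      have heq : ((k' : ℝ) - k) / ((m : ℝ) + 1) - ((n : ℝ) - n')
          = (u (w k) - (k : ℝ) / ((m : ℝ) + 1) - n) - (u (w k) - (k' : ℝ) / ((m : ℝ) + 1) - n') := by
        field_simp
        ring
      rw [heq, sub_eq_add_neg]
      calc |(u (w k) - (k : ℝ) / ((m : ℝ) + 1) - n) + -(u (w k) - (k' : ℝ) / ((m : ℝ) + 1) - n')|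
          ≤ |u (w k) - (k : ℝ) / ((m : ℝ) + 1) - n| + |-(u (w k) - (k' : ℝ) / ((m : ℝ) + 1) - n')| :=
            abs_add_le _ _
        _ = |u (w k) - (k : ℝ) / ((m : ℝ) + 1) - n| + |u (w k) - (k' : ℝ) / ((m : ℝ) + 1) - n'| := by
            rw [abs_neg]
        _ ≤ δ + δ := add_le_add hn hn'
        _ = 2 * δ := by ring
    have key2 : |((k' : ℝ) - k) - ((n : ℝ) - n') * ((m : ℝ) + 1)| ≤ 2 / 3 := by
      have heq : ((k' : ℝ) - k) - ((n : ℝ) - n') * ((m : ℝ) + 1)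
          = (((k' : ℝ) - k) / ((m : ℝ) + 1) - ((n : ℝ) - n')) * ((m : ℝ) + 1) := by
        field_simp
      have h2 : 2 * δ * ((m : ℝ) + 1) = 2 / 3 := by
        rw [hδ]; field_simp
      rw [heq, abs_mul, abs_of_pos hm1, ← h2]
      exact mul_le_mul_of_nonneg_right key (le_of_lt hm1)
    have hz0 : ((k' : ℤ) - k - (n - n') * ((m : ℤ) + 1)) = 0 := by
      have h1 : |(((k' : ℤ) - k - (n - n') * ((m : ℤ) + 1) : ℤ) : ℝ)| < 1 := by
        have hcast : (((k' : ℤ) - k - (n - n') * ((m : ℤ) + 1) : ℤ) : ℝ)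
            = ((k' : ℝ) - k) - ((n : ℝ) - n') * ((m : ℝ) + 1) := by push_cast; ring
        rw [hcast]
        exact lt_of_le_of_lt key2 (by norm_num)
      have h2 := abs_lt.mp h1
      have h3 : (-1 : ℤ) < (k' : ℤ) - k - (n - n') * ((m : ℤ) + 1) := by exact_mod_cast h2.1
      have h4 : ((k' : ℤ) - k - (n - n') * ((m : ℤ) + 1)) < 1 := by exact_mod_cast h2.2
      omega
    have hklt : (k : ℤ) < m + 1 := by exact_mod_cast k.isLt
    have hk'lt : (k' : ℤ) < m + 1 := by exact_mod_cast k'.isLt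
    have hk0 : (0 : ℤ) ≤ (k : ℤ) := by exact_mod_cast Nat.zero_le _
    have hk'0 : (0 : ℤ) ≤ (k' : ℤ) := by exact_mod_cast Nat.zero_le _
    have hb : n - n' = 0 := by
      rcases lt_trichotomy (n - n') 0 with h | h | h
      · have h5 : (n - n') * ((m : ℤ) + 1) ≤ (-1) * ((m : ℤ) + 1) :=
          mul_le_mul_of_nonneg_right (by omega) (by omega)
        linarith
      · exact h
      · have h5 : (1 : ℤ) * ((m : ℤ) + 1) ≤ (n - n') * ((m : ℤ) + 1) :=
          mul_le_mul_of_nonneg_right (by omega) (by omega)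
        linarith
    have hprod : (n - n') * ((m : ℤ) + 1) = 0 := by rw [hb]; ring
    have : (k : ℤ) = k' := by omega
    exact Fin.ext (by exact_mod_cast this)
  have hcard := Fintype.card_le_of_injective w hinj
  simp at hcard

/-- jiggling cubic partitions to properly align with given points. -/
theorem statement4 (d : ℕ) (hd : 1 ≤ d) (s : ℝ) (hs : s ∈ Set.Ioc (0 : ℝ) 1)
    (m : ℕ) (hm : 1 ≤ m) :
    ∃ off : Fin ((m + 1) ^ d) → E d,
      ∀ xs : Fin m → E d, (∀ i, xs i ∈ Xcube d) →
        ∃ ℓ : Fin ((m + 1) ^ d), ∀ i : Fin m, ∀ t : ℝ, 0 < t → t ≤ s / (3 * m + 3) →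
          linfBall (xs i) t ⊆ cell (off ℓ) s (xs i) := by
  have hs0 : 0 < s := hs.1
  have hsne : s ≠ 0 := ne_of_gt hs0
  have hcard : Fintype.card (Fin d → Fin (m + 1)) = (m + 1) ^ d := by simp
  let e : (Fin d → Fin (m + 1)) ≃ Fin ((m + 1) ^ d) := Fintype.equivFinOfCardEq hcard
  refine ⟨fun ℓ j => s * ((e.symm ℓ j : ℕ) : ℝ) / ((m : ℝ) + 1), ?_⟩
  intro xs hxs
  choose K hK using fun j : Fin d => exists_good_shift m (fun i => xs i j / s)
  refine ⟨e K, ?_⟩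
  intro i t ht hts z hz
  have hzlo : ∀ j, xs i j - t ≤ z j := fun j => hz.1 j
  have hzhi : ∀ j, z j ≤ xs i j + t := fun j => hz.2 j
  set δ : ℝ := 1 / (3 * (m : ℝ) + 3) with hδ
  have hts' : t ≤ s * δ := by
    have : s / (3 * (m : ℝ) + 3) = s * δ := by rw [hδ]; ring
    linarith [hts, this.symm.le]
  intro j
  have hEs : e.symm (e K) = K := e.symm_apply_apply K
  have hoffval : (fun j => s * ((e.symm (e K) j : ℕ) : ℝ) / ((m : ℝ) + 1)) j
      = s * ((K j : ℕ) : ℝ) / ((m : ℝ) + 1) := by rw [hEs]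
  set off : ℝ := s * ((K j : ℕ) : ℝ) / ((m : ℝ) + 1) with hoff
  set y : ℝ := (xs i j - off) / s with hy
  have hsy : s * y = xs i j - off := by
    rw [hy]; field_simp
  have hyfr : y = xs i j / s - ((K j : ℕ) : ℝ) / ((m : ℝ) + 1) := by
    rw [hy, div_eq_iff hsne, hoff, sub_mul, div_mul_eq_mul_div, div_mul_eq_mul_div]
    rw [mul_div_cancel_right₀ _ hsne]
    ring
  have hfr := hK j i
  rw [← hyfr] at hfr
  have hfr1 : δ < Int.fract y := hfr.1
  have hfr2 : Int.fract y < 1 - δ := hfr.2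
  have hfl : Int.fract y = y - ⌊y⌋ := (Int.self_sub_floor y).symm
  have e1 : s * Int.fract y = (xs i j - off) - s * (⌊y⌋ : ℝ) := by
    rw [hfl, mul_sub, hsy]
  have e2 : s * δ < s * Int.fract y := by
    exact (mul_lt_mul_iff_right₀ hs0).mpr hfr1
  have e3 : s * Int.fract y < s * (1 - δ) := (mul_lt_mul_iff_right₀ hs0).mpr hfr2
  have hcellLo : cellLo (fun j => s * ((e.symm (e K) j : ℕ) : ℝ) / ((m : ℝ) + 1)) s (xs i) j
      = off + s * (⌊y⌋ : ℝ) := by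
    simp only [cellLo, hoffval]
    rfl
  constructor
  · rw [hcellLo]
    have := hzlo j
    linarith
  · rw [hcellLo]
    have := hzhi j
    nlinarith


end Pantry
end
end

section
/- Let X = [-1,1]^d and let A₁, …, A_k be mutually disjoint subsets of X such that for each i ∈ {1,…,k} there exist z_i⁻, z_i⁺ ∈ X with z_i⁻ < z_i⁺ (coordinatewise) and (z_i⁻, z_i⁺) ⊂ A_i ⊂ [z_i⁻, z_i⁺]. Let f := Σ_{i=1}^k α_i 1_{A_i} with α_i ∈ ℝ, and let ε > 0 satisfy ε < min{(z_{i,j}⁺ − z_{i,j}⁻)/2 : i = 1,…,k, j = 1,…,d}. Then for all m₁ ≥ 2dk and m₂ ≥ k there exists a ReLU neural network g_ε of architecture (d, m₁, m₂, 1) (two hidden layers of widths m₁ and m₂) such that g_ε(x) = f(x) for every x ∈ (∪_{i=1}^k [z_i⁻+ε, z_i⁺−ε]) ∪ (X \ ∪_{i=1}^k [z_i⁻, z_i⁺]); in particular {x ∈ X : f(x) ≠ g_ε(x)} ⊂ ∪_{i=1}^k ([z_i⁻, z_i⁺] \ [z_i⁻+ε, z_i⁺−ε]). -/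
open MeasureTheory ENNReal Filter Set
open scoped Classical

noncomputable section

namespace Pantry

/-!
For each box `[z⁻, z⁺]` the first layer carries `2d` ramps, one per face, each of the form
`relu((z⁻ⱼ + ε - xⱼ)/ε)` or `relu((xⱼ - z⁺ⱼ + ε)/ε)`: they all vanish on the shrunk box
`[z⁻ + ε, z⁺ - ε]`, and some ramp is at least `1` outside the open box `(z⁻, z⁺)`. A second-layer
neuron `relu(1 - Σ ramps)` is therefore `1` on the shrunk box and `0` off the open box, so it
agrees with `1_A` wherever `x ∈ A` forces `x` into the shrunk box. This is the case on the region
of the theorem: off `⋃ [z⁻, z⁺]` no `A_i` is hit, and a point of a shrunk box lies in no other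
`A_i`, by disjointness.
-/

lemma sum_extend_zero_mul {ι κ : Type*} [Fintype ι] [Fintype κ] (e : ι ↪ κ) (f : ι → ℝ)
    (h : κ → ℝ) : ∑ t, Function.extend e f 0 t * h t = ∑ j, f j * h (e j) := by
  rw [← Finset.sum_subset (Finset.subset_univ (Finset.univ.map e)), Finset.sum_map]
  · simp only [e.injective.extend_apply]
  · intro t _ ht
    rw [Function.extend_apply' _ _ _ (by simpa using ht), Pi.zero_apply, zero_mul]

/-- Unused neurons of a wider network get zero outgoing weights. -/
lemma mem_NN2_of_embedding {d m₁ m₂ : ℕ} {ι₁ ι₂ : Type*} [Fintype ι₁] [Fintype ι₂]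
    (e₁ : ι₁ ↪ Fin m₁) (e₂ : ι₂ ↪ Fin m₂) (A1 : ι₁ → E d) (b1 : ι₁ → ℝ) (A2 : ι₂ → ι₁ → ℝ)
    (b2 : ι₂ → ℝ) (a : ι₂ → ℝ) (b : ℝ) :
    (fun x => (∑ j, a j * relu ((∑ i, A2 j i * relu ((∑ c, A1 i c * x c) + b1 i)) + b2 j)) + b)
      ∈ NN2 d m₁ m₂ := by
  refine ⟨Function.extend e₁ A1 0, Function.extend e₁ b1 0,
    fun s => Function.extend e₁ (Function.extend e₂ A2 0 s) 0, Function.extend e₂ b2 0,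
    Function.extend e₂ a 0, b, ?_⟩
  funext x
  simp only [sum_extend_zero_mul, e₁.injective.extend_apply, e₂.injective.extend_apply]

lemma relu_eq_zero {t : ℝ} (ht : t ≤ 0) : relu t = 0 := max_eq_left ht

lemma relu_nonneg (t : ℝ) : 0 ≤ relu t := le_max_left 0 t

lemma le_relu (t : ℝ) : t ≤ relu t := le_max_right 0 t

section bump

variable {d : ℕ} {z₁ z₂ x : E d} {ρ : ℝ}

lemma bump_eq_relu_one_sub :
    bump z₁ z₂ ρ x =
      relu (1 - ∑ j, (relu ((z₁ j + ρ - x j) / ρ) + relu ((x j - z₂ j + ρ) / ρ))) := by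
  rw [bump]
  congr 1
  simp only [Finset.sum_sub_distrib, Finset.sum_add_distrib, Finset.sum_const,
    Finset.card_univ, Fintype.card_fin, nsmul_eq_mul, mul_one]
  ring

lemma bump_eq_one (hρ : 0 < ρ) (hx : x ∈ Set.Icc (fun j => z₁ j + ρ) (fun j => z₂ j - ρ)) :
    bump z₁ z₂ ρ x = 1 := by
  have hlo (j : Fin d) : relu ((z₁ j + ρ - x j) / ρ) = 0 :=
    relu_eq_zero (div_nonpos_of_nonpos_of_nonneg (by linarith [hx.1 j]) hρ.le)
  have hhi (j : Fin d) : relu ((x j - z₂ j + ρ) / ρ) = 0 :=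
    relu_eq_zero (div_nonpos_of_nonpos_of_nonneg (by linarith [hx.2 j]) hρ.le)
  rw [bump_eq_relu_one_sub]
  simp only [hlo, hhi, add_zero, Finset.sum_const_zero, sub_zero]
  exact max_eq_right zero_le_one

lemma bump_eq_zero (hρ : 0 < ρ) (hx : ∃ j, x j ≤ z₁ j ∨ z₂ j ≤ x j) : bump z₁ z₂ ρ x = 0 := by
  obtain ⟨j, hj⟩ := hx
  have hterm : 1 ≤ relu ((z₁ j + ρ - x j) / ρ) + relu ((x j - z₂ j + ρ) / ρ) := by
    rcases hj with hj | hj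
    · have : 1 ≤ (z₁ j + ρ - x j) / ρ := by rw [le_div_iff₀ hρ]; linarith
      linarith [le_relu ((z₁ j + ρ - x j) / ρ), relu_nonneg ((x j - z₂ j + ρ) / ρ)]
    · have : 1 ≤ (x j - z₂ j + ρ) / ρ := by rw [le_div_iff₀ hρ]; linarith
      linarith [le_relu ((x j - z₂ j + ρ) / ρ), relu_nonneg ((z₁ j + ρ - x j) / ρ)]
  rw [bump_eq_relu_one_sub]
  refine relu_eq_zero (sub_nonpos.2 (hterm.trans ?_))
  exact Finset.single_le_sum
    (f := fun j => relu ((z₁ j + ρ - x j) / ρ) + relu ((x j - z₂ j + ρ) / ρ))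
    (fun i _ => add_nonneg (relu_nonneg _) (relu_nonneg _)) (Finset.mem_univ j)

lemma bump_eq_indicator (hρ : 0 < ρ) {S : Set (E d)}
    (hS : {x : E d | ∀ j, z₁ j < x j ∧ x j < z₂ j} ⊆ S)
    (hx : x ∈ S → x ∈ Set.Icc (fun j => z₁ j + ρ) (fun j => z₂ j - ρ)) :
    bump z₁ z₂ ρ x = S.indicator 1 x := by
  by_cases hxS : x ∈ S
  · rw [Set.indicator_of_mem hxS, Pi.one_apply, bump_eq_one hρ (hx hxS)]
  · rw [Set.indicator_of_notMem hxS, bump_eq_zero hρ]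
    by_contra! h
    exact hxS (hS h)

end bump

lemma sum_mul_bump_mem_NN2 {d k m₁ m₂ : ℕ} (hm₁ : 2 * d * k ≤ m₁) (hm₂ : k ≤ m₂)
    (z₁ z₂ : Fin k → E d) (ρ : ℝ) (α : Fin k → ℝ) :
    (fun x => ∑ i, α i * bump (z₁ i) (z₂ i) ρ x) ∈ NN2 d m₁ m₂ := by
  have hcard : Fintype.card (Fin k × Fin d × Bool) ≤ m₁ := by
    simp only [Fintype.card_prod, Fintype.card_fin, Fintype.card_bool]
    linarith [show k * (d * 2) = 2 * d * k by ring]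
  let e₁ : Fin k × Fin d × Bool ↪ Fin m₁ :=
    (Fintype.equivFin _).toEmbedding.trans (Fin.castLEEmb hcard)
  let A1 : Fin k × Fin d × Bool → E d := fun t => Pi.single t.2.1 (if t.2.2 then ρ⁻¹ else -ρ⁻¹)
  let b1 : Fin k × Fin d × Bool → ℝ := fun t =>
    if t.2.2 then (ρ - z₂ t.1 t.2.1) / ρ else (z₁ t.1 t.2.1 + ρ) / ρ
  let A2 : Fin k → Fin k × Fin d × Bool → ℝ := fun i t => if t.1 = i then -1 else 0
  convert mem_NN2_of_embedding e₁ (Fin.castLEEmb hm₂) A1 b1 A2 (fun _ => 1) α 0 using 1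
  funext x
  rw [add_zero]
  refine Finset.sum_congr rfl fun i _ => ?_
  rw [bump_eq_relu_one_sub]
  congr 2
  have hramps (j : Fin d) :
      relu ((z₁ i j + ρ - x j) / ρ) + relu ((x j - z₂ i j + ρ) / ρ) =
        relu (ρ⁻¹ * x j + (ρ - z₂ i j) / ρ) + relu (-(ρ⁻¹ * x j) + (z₁ i j + ρ) / ρ) := by
    rw [add_comm]
    congr 2 <;> ring
  simp only [hramps, Pi.single_apply, ite_mul, neg_mul, zero_mul, Finset.sum_ite_eq',
    Finset.mem_univ, ↓reduceIte, one_mul, Fintype.sum_prod_type, Finset.sum_ite_irrel,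
    Finset.sum_neg_distrib, Fintype.univ_bool, Finset.mem_singleton, Bool.true_eq_false,
    not_false_eq_true, Finset.sum_insert, Finset.sum_singleton, Bool.false_eq_true,
    Finset.sum_const_zero, A2, A1, b1]
  ring

theorem statement7_general (d k : ℕ)
    (A : Fin k → Set (E d))
    (hdisj : ∀ i j, i ≠ j → Disjoint (A i) (A j))
    (zm zp : Fin k → E d)
    (hAlo : ∀ i, {x : E d | ∀ j, zm i j < x j ∧ x j < zp i j} ⊆ A i)
    (hAhi : ∀ i, A i ⊆ Set.Icc (zm i) (zp i))
    (α : Fin k → ℝ) (ε : ℝ) (hε : 0 < ε)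
    (m₁ m₂ : ℕ) (hm₁ : 2 * d * k ≤ m₁) (hm₂ : k ≤ m₂) :
    ∃ g ∈ NN2 d m₁ m₂,
      ∀ x ∈ (⋃ i, Set.Icc (fun j => zm i j + ε) (fun j => zp i j - ε)) ∪
          (Xcube d \ ⋃ i, Set.Icc (zm i) (zp i)),
        g x = ∑ i, α i * (A i).indicator 1 x := by
  refine ⟨_, sum_mul_bump_mem_NN2 hm₁ hm₂ zm zp ε α, fun x hx => ?_⟩
  refine Finset.sum_congr rfl fun i _ => ?_
  rw [bump_eq_indicator hε (hAlo i) fun hxA => ?_]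
  rcases hx with hx | ⟨-, hx⟩
  · obtain ⟨i₀, hx₀⟩ := Set.mem_iUnion.1 hx
    have hxA₀ : x ∈ A i₀ := hAlo i₀ fun j => ⟨by linarith [hx₀.1 j], by linarith [hx₀.2 j]⟩
    obtain rfl : i = i₀ := by
      by_contra hne
      exact Set.disjoint_left.1 (hdisj i i₀ hne) hxA hxA₀
    exact hx₀
  · exact absurd (Set.mem_iUnion.2 ⟨i, hAhi i hxA⟩) hx

/-- approximation of histograms by two-hidden-layer ReLU networks. -/
theorem statement7 (d k : ℕ) (hd : 1 ≤ d)
    (A : Fin k → Set (E d)) (hsub : ∀ i, A i ⊆ Xcube d)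
    (hdisj : ∀ i j, i ≠ j → Disjoint (A i) (A j))
    (zm zp : Fin k → E d) (hz : ∀ i, ∀ j, zm i j < zp i j)
    (hzX : ∀ i, zm i ∈ Xcube d ∧ zp i ∈ Xcube d)
    (hAlo : ∀ i, {x : E d | ∀ j, zm i j < x j ∧ x j < zp i j} ⊆ A i)
    (hAhi : ∀ i, A i ⊆ Set.Icc (zm i) (zp i))
    (α : Fin k → ℝ) (ε : ℝ) (hε : 0 < ε)
    (hεlt : ∀ i j, ε < (zp i j - zm i j) / 2)
    (m₁ m₂ : ℕ) (hm₁ : 2 * d * k ≤ m₁) (hm₂ : k ≤ m₂) :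
    ∃ g ∈ NN2 d m₁ m₂,
      ∀ x ∈ (⋃ i, Set.Icc (fun j => zm i j + ε) (fun j => zp i j - ε)) ∪
          (Xcube d \ ⋃ i, Set.Icc (zm i) (zp i)),
        g x = ∑ i, α i * (A i).indicator 1 x :=
  statement7_general d k A hdisj zm zp hAlo hAhi α ε hε m₁ m₂ hm₁ hm₂

end Pantry
end
end

section
/- Let P be a probability measure on X×Y with marginal P_X, let A ⊂ X be measurable and non-empty, and set L_A(x,y,t) := 1_A(x)·L(y,t). (1) If Y = {-1,1} and L is the classification loss, then for all measurable f₁, f₂ : X → ℝ: |R_{L_A,P}(f₁) − R_{L_A,P}(f₂)| ≤ P_X(A ∩ {f₁ ≠ f₂}). (2) If Y = [-1,1] and L is the least squares loss, then for all measurable f₁, f₂ : X → [-1,1]: |R_{L_A,P}(f₁) − R_{L_A,P}(f₂)| ≤ M·P_X(A ∩ {f₁ ≠ f₂}), where M := M₁ + M₂ and M_j := sup_{x∈X} |f*_{L,P}(x) − f_j(x)|² for j = 1,2, with f*_{L,P}(x) := E_P(Y|x). -/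
open MeasureTheory ENNReal Filter Set
open scoped Classical

noncomputable section

namespace Pantry

section AuxStatement10

lemma aux_integrable_of_bound {α : Type*} [MeasurableSpace α] {μ : Measure α}
    [IsFiniteMeasure μ] {f : α → ℝ} (hf : AEStronglyMeasurable f μ) (C : ℝ)
    (h : ∀ᵐ a ∂μ, |f a| ≤ C) : Integrable f μ :=
  (integrable_const C).mono' hf (by simpa [Real.norm_eq_abs] using h)

lemma measurable_sgn : Measurable sgn := by
  unfold sgn
  exact Measurable.ite (measurableSet_lt measurable_id measurable_const)
    measurable_const measurable_const

lemma indicator_one_nonneg {α : Type*} (A : Set α) (x : α) :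
    0 ≤ A.indicator (1 : α → ℝ) x :=
  Set.indicator_nonneg (fun _ _ => zero_le_one) x

lemma indicator_one_le_one {α : Type*} (A : Set α) (x : α) :
    A.indicator (1 : α → ℝ) x ≤ 1 := by
  by_cases h : x ∈ A <;> simp [h]

lemma Lclass_mem (y t : ℝ) : 0 ≤ Lclass y t ∧ Lclass y t ≤ 1 := by
  unfold Lclass; split <;> norm_num

end AuxStatement10

/-- risk difference bounds. -/
theorem statement10 {γ : Type*} [MeasurableSpace γ] (P : Measure (γ × ℝ))
    [IsProbabilityMeasure P] (A : Set γ) (hA : A.Nonempty) (hAm : MeasurableSet A) :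
    ((∀ᵐ p ∂P, p.2 ∈ ({-1, 1} : Set ℝ)) →
      ∀ f₁ f₂ : γ → ℝ, Measurable f₁ → Measurable f₂ →
        |RiskG (fun x y t => A.indicator 1 x * Lclass y t) P f₁ -
          RiskG (fun x y t => A.indicator 1 x * Lclass y t) P f₂| ≤
        (P.map Prod.fst (A ∩ {x | f₁ x ≠ f₂ x})).toReal) ∧
    ((∀ᵐ p ∂P, p.2 ∈ Set.Icc (-1 : ℝ) 1) →
      ∀ f₁ f₂ : γ → ℝ, Measurable f₁ → Measurable f₂ →
        (∀ x, f₁ x ∈ Set.Icc (-1 : ℝ) 1) → (∀ x, f₂ x ∈ Set.Icc (-1 : ℝ) 1) →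
        ∀ fstar : γ → ℝ, Measurable fstar → (∀ x, fstar x ∈ Set.Icc (-1 : ℝ) 1) →
        (∀ s : Set γ, MeasurableSet s →
          ∫ p in {p : γ × ℝ | p.1 ∈ s}, p.2 ∂P = ∫ x in s, fstar x ∂(P.map Prod.fst)) →
        |RiskG (fun x y t => A.indicator 1 x * Lls y t) P f₁ -
          RiskG (fun x y t => A.indicator 1 x * Lls y t) P f₂| ≤
        ((⨆ x, |fstar x - f₁ x| ^ 2) + (⨆ x, |fstar x - f₂ x| ^ 2)) *
          (P.map Prod.fst (A ∩ {x | f₁ x ≠ f₂ x})).toReal) := by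
  classical
  have hne : Nonempty γ := ⟨hA.choose⟩
  constructor
  · -- classification part
    intro hY f₁ f₂ hf₁ hf₂
    set S : Set γ := A ∩ {x | f₁ x ≠ f₂ x} with hSdef
    have hSm : MeasurableSet S := hAm.inter (measurableSet_eq_fun hf₁ hf₂).compl
    set T : Set (γ × ℝ) := Prod.fst ⁻¹' S with hTdef
    have hTm : MeasurableSet T := measurable_fst hSm
    have hmap : P.map Prod.fst S = P T := Measure.map_apply measurable_fst hSm
    have hLm : ∀ f : γ → ℝ, Measurable f →
        Measurable (fun p : γ × ℝ => A.indicator 1 p.1 * Lclass p.2 (f p.1)) := by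
      intro f hf
      refine Measurable.mul ((measurable_one.indicator hAm).comp measurable_fst) ?_
      unfold Lclass
      exact Measurable.ite
        (measurableSet_le (measurable_snd.mul (measurable_sgn.comp (hf.comp measurable_fst)))
          measurable_const) measurable_const measurable_const
    have hbound : ∀ f : γ → ℝ, ∀ p : γ × ℝ, |A.indicator 1 p.1 * Lclass p.2 (f p.1)| ≤ 1 := by
      intro f p
      rw [abs_mul, abs_of_nonneg (indicator_one_nonneg A p.1),
        abs_of_nonneg (Lclass_mem p.2 (f p.1)).1]
      exact mul_le_one₀ (indicator_one_le_one A p.1) (Lclass_mem p.2 (f p.1)).1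
        (Lclass_mem p.2 (f p.1)).2
    have hint : ∀ f : γ → ℝ, Measurable f →
        Integrable (fun p : γ × ℝ => A.indicator 1 p.1 * Lclass p.2 (f p.1)) P :=
      fun f hf => aux_integrable_of_bound (hLm f hf).aestronglyMeasurable 1
        (ae_of_all _ (hbound f))
    have hptwise : ∀ p : γ × ℝ,
        |A.indicator 1 p.1 * Lclass p.2 (f₁ p.1) - A.indicator 1 p.1 * Lclass p.2 (f₂ p.1)|
          ≤ T.indicator 1 p := by
      intro p
      by_cases hxA : p.1 ∈ A
      · by_cases heq : f₁ p.1 = f₂ p.1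
        · rw [heq]
          simpa using indicator_one_nonneg T p
        · have hpT : p ∈ T := ⟨hxA, heq⟩
          rw [Set.indicator_of_mem hpT, Set.indicator_of_mem hxA]
          simp only [Pi.one_apply, one_mul]
          rw [abs_sub_le_iff]
          constructor <;>
            linarith [(Lclass_mem p.2 (f₁ p.1)).1, (Lclass_mem p.2 (f₁ p.1)).2,
              (Lclass_mem p.2 (f₂ p.1)).1, (Lclass_mem p.2 (f₂ p.1)).2]
      · rw [Set.indicator_of_notMem hxA]
        simpa using indicator_one_nonneg T p
    unfold RiskG
    rw [← integral_sub (hint f₁ hf₁) (hint f₂ hf₂)]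
    calc |∫ p, (A.indicator 1 p.1 * Lclass p.2 (f₁ p.1)
            - A.indicator 1 p.1 * Lclass p.2 (f₂ p.1)) ∂P|
        ≤ ∫ p, |A.indicator 1 p.1 * Lclass p.2 (f₁ p.1)
            - A.indicator 1 p.1 * Lclass p.2 (f₂ p.1)| ∂P := by
          simpa [Real.norm_eq_abs] using norm_integral_le_integral_norm (μ := P)
            (f := fun p : γ × ℝ => A.indicator 1 p.1 * Lclass p.2 (f₁ p.1)
              - A.indicator 1 p.1 * Lclass p.2 (f₂ p.1))
      _ ≤ ∫ p, T.indicator 1 p ∂P := by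
          refine integral_mono ((hint f₁ hf₁).sub (hint f₂ hf₂)).abs
            ((integrable_const (1 : ℝ)).indicator hTm) hptwise
      _ = (P T).toReal := integral_indicator_one hTm
      _ = (P.map Prod.fst S).toReal := by rw [hmap]
  · -- least squares part
    intro hY f₁ f₂ hf₁ hf₂ hb₁ hb₂ u hum hub hcond
    set S : Set γ := A ∩ {x | f₁ x ≠ f₂ x} with hSdef
    have hSm : MeasurableSet S := hAm.inter (measurableSet_eq_fun hf₁ hf₂).compl
    set T : Set (γ × ℝ) := Prod.fst ⁻¹' S with hTdef
    have hTm : MeasurableSet T := measurable_fst hSm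
    have hmap : P.map Prod.fst S = P T := Measure.map_apply measurable_fst hSm
    -- boundedness facts
    have habs : ∀ (f : γ → ℝ), (∀ x, f x ∈ Set.Icc (-1 : ℝ) 1) → ∀ x, |f x| ≤ 1 :=
      fun f hf x => abs_le.mpr ⟨(hf x).1, (hf x).2⟩
    have hdiff : ∀ (f : γ → ℝ), (∀ x, f x ∈ Set.Icc (-1 : ℝ) 1) → ∀ x, |u x - f x| ≤ 2 := by
      intro f hf x
      calc |u x - f x| ≤ |u x| + |f x| := abs_sub _ _
        _ ≤ 2 := by linarith [habs u hub x, habs f hf x]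
    have hbdd₁ : BddAbove (Set.range fun x => |u x - f₁ x| ^ 2) := by
      refine ⟨4, ?_⟩
      rintro _ ⟨x, rfl⟩
      calc |u x - f₁ x| ^ 2 ≤ 2 ^ 2 := by
            have := hdiff f₁ hb₁ x
            nlinarith [abs_nonneg (u x - f₁ x)]
        _ = 4 := by norm_num
    have hbdd₂ : BddAbove (Set.range fun x => |u x - f₂ x| ^ 2) := by
      refine ⟨4, ?_⟩
      rintro _ ⟨x, rfl⟩
      calc |u x - f₂ x| ^ 2 ≤ 2 ^ 2 := by
            have := hdiff f₂ hb₂ x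
            nlinarith [abs_nonneg (u x - f₂ x)]
        _ = 4 := by norm_num
    set M₁ : ℝ := ⨆ x, |u x - f₁ x| ^ 2 with hM₁def
    set M₂ : ℝ := ⨆ x, |u x - f₂ x| ^ 2 with hM₂def
    have hM₁ : ∀ x, (u x - f₁ x) ^ 2 ≤ M₁ := fun x => by
      rw [← sq_abs]; exact le_ciSup hbdd₁ x
    have hM₂ : ∀ x, (u x - f₂ x) ^ 2 ≤ M₂ := fun x => by
      rw [← sq_abs]; exact le_ciSup hbdd₂ x
    have hM₁0 : 0 ≤ M₁ := le_trans (sq_nonneg _) (hM₁ hne.some)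
    have hM₂0 : 0 ≤ M₂ := le_trans (sq_nonneg _) (hM₂ hne.some)
    set M : ℝ := M₁ + M₂ with hMdef
    have hM0 : 0 ≤ M := add_nonneg hM₁0 hM₂0
    -- integrands
    have hsnd : ∀ᵐ p ∂P, |(p : γ × ℝ).2| ≤ 1 := by
      filter_upwards [hY] with p hp
      exact abs_le.mpr ⟨hp.1, hp.2⟩
    have hLmeas : ∀ f : γ → ℝ, Measurable f →
        Measurable (fun p : γ × ℝ => A.indicator 1 p.1 * Lls p.2 (f p.1)) := by
      intro f hf
      refine Measurable.mul ((measurable_one.indicator hAm).comp measurable_fst) ?_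
      unfold Lls
      exact (measurable_snd.sub (hf.comp measurable_fst)).pow measurable_const
    have hLint : ∀ f : γ → ℝ, Measurable f → (∀ x, f x ∈ Set.Icc (-1 : ℝ) 1) →
        Integrable (fun p : γ × ℝ => A.indicator 1 p.1 * Lls p.2 (f p.1)) P := by
      intro f hf hfb
      refine aux_integrable_of_bound (hLmeas f hf).aestronglyMeasurable 4 ?_
      filter_upwards [hsnd] with p hp
      have h1 : |Lls p.2 (f p.1)| ≤ 4 := by
        unfold Lls
        rw [abs_of_nonneg (sq_nonneg _)]
        have h2 : |p.2 - f p.1| ≤ 2 := by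
          calc |p.2 - f p.1| ≤ |p.2| + |f p.1| := abs_sub _ _
            _ ≤ 2 := by linarith [habs f hfb p.1]
        nlinarith [abs_nonneg (p.2 - f p.1), sq_abs (p.2 - f p.1)]
      calc |A.indicator 1 p.1 * Lls p.2 (f p.1)| = |A.indicator 1 p.1| * |Lls p.2 (f p.1)| :=
            abs_mul _ _
        _ ≤ 1 * 4 := by
            refine mul_le_mul ?_ h1 (abs_nonneg _) zero_le_one
            rw [abs_of_nonneg (indicator_one_nonneg A p.1)]
            exact indicator_one_le_one A p.1
        _ = 4 := by norm_num
    -- decomposition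
    set q : γ × ℝ → ℝ :=
      fun p => A.indicator 1 p.1 * ((u p.1 - f₁ p.1) ^ 2 - (u p.1 - f₂ p.1) ^ 2) with hqdef
    set φ : γ → ℝ := fun x => 2 * (A.indicator 1 x * (f₂ x - f₁ x)) with hφdef
    set g : γ × ℝ → ℝ := fun p => p.2 - u p.1 with hgdef
    have hdecomp : ∀ p : γ × ℝ,
        A.indicator 1 p.1 * Lls p.2 (f₁ p.1) - A.indicator 1 p.1 * Lls p.2 (f₂ p.1)
          = q p + φ p.1 * g p := by
      intro p
      simp only [hqdef, hφdef, hgdef, Lls]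
      ring
    have hφm : Measurable φ :=
      (((measurable_one.indicator hAm).mul (hf₂.sub hf₁)).const_mul 2)
    have hφb : ∀ x, |φ x| ≤ 4 := by
      intro x
      have : |f₂ x - f₁ x| ≤ 2 := by
        calc |f₂ x - f₁ x| ≤ |f₂ x| + |f₁ x| := abs_sub _ _
          _ ≤ 2 := by linarith [habs f₁ hb₁ x, habs f₂ hb₂ x]
      calc |φ x| = 2 * (|A.indicator 1 x| * |f₂ x - f₁ x|) := by
            rw [hφdef]; rw [abs_mul, abs_mul]; norm_num
        _ ≤ 2 * (1 * 2) := by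
            refine mul_le_mul_of_nonneg_left ?_ (by norm_num)
            refine mul_le_mul ?_ this (abs_nonneg _) zero_le_one
            rw [abs_of_nonneg (indicator_one_nonneg A x)]
            exact indicator_one_le_one A x
        _ = 4 := by norm_num
    have hgm : Measurable g := measurable_snd.sub (hum.comp measurable_fst)
    have hgb : ∀ᵐ p ∂P, |g p| ≤ 2 := by
      filter_upwards [hsnd] with p hp
      calc |g p| ≤ |p.2| + |u p.1| := abs_sub _ _
        _ ≤ 2 := by linarith [habs u hub p.1]
    have hgint : Integrable g P := aux_integrable_of_bound hgm.aestronglyMeasurable 2 hgb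
    have hqm : Measurable q :=
      ((measurable_one.indicator hAm).comp measurable_fst).mul
        ((((hum.comp measurable_fst).sub (hf₁.comp measurable_fst)).pow measurable_const).sub
          (((hum.comp measurable_fst).sub (hf₂.comp measurable_fst)).pow measurable_const))
    have hqb : ∀ p : γ × ℝ, |q p| ≤ M * T.indicator 1 p := by
      intro p
      by_cases hxA : p.1 ∈ A
      · by_cases heq : f₁ p.1 = f₂ p.1
        · have : q p = 0 := by simp [hqdef, heq]
          rw [this, abs_zero]
          exact mul_nonneg hM0 (indicator_one_nonneg T p)
        · have hpT : p ∈ T := ⟨hxA, heq⟩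
          rw [Set.indicator_of_mem hpT, Pi.one_apply, mul_one]
          have : q p = (u p.1 - f₁ p.1) ^ 2 - (u p.1 - f₂ p.1) ^ 2 := by
            simp [hqdef, Set.indicator_of_mem hxA]
          rw [this, abs_sub_le_iff]
          constructor <;>
            nlinarith [hM₁ p.1, hM₂ p.1, sq_nonneg (u p.1 - f₁ p.1), sq_nonneg (u p.1 - f₂ p.1)]
      · have : q p = 0 := by simp [hqdef, Set.indicator_of_notMem hxA]
        rw [this, abs_zero]
        exact mul_nonneg hM0 (indicator_one_nonneg T p)
    have hqint : Integrable q P :=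
      aux_integrable_of_bound hqm.aestronglyMeasurable (M * 1) (ae_of_all _ fun p => by
        calc |q p| ≤ M * T.indicator 1 p := hqb p
          _ ≤ M * 1 := mul_le_mul_of_nonneg_left (indicator_one_le_one T p) hM0)
    have hcrossm : Measurable (fun p : γ × ℝ => φ p.1 * g p) :=
      (hφm.comp measurable_fst).mul hgm
    have hcrossint : Integrable (fun p : γ × ℝ => φ p.1 * g p) P := by
      refine aux_integrable_of_bound hcrossm.aestronglyMeasurable 8 ?_
      filter_upwards [hgb] with p hp
      calc |φ p.1 * g p| = |φ p.1| * |g p| := abs_mul _ _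
        _ ≤ 4 * 2 := mul_le_mul (hφb p.1) hp (abs_nonneg _) (by norm_num)
        _ = 8 := by norm_num
    -- cross term vanishes
    have hcross0 : ∫ p, φ p.1 * g p ∂P = 0 := by
      have hm : MeasurableSpace.comap (Prod.fst : γ × ℝ → γ) inferInstance
          ≤ Prod.instMeasurableSpace := Measurable.comap_le measurable_fst
      haveI : SigmaFinite (P.trim hm) := inferInstance
      -- set integrals of g over preimage sets vanish
      have hset : ∀ s : Set γ, MeasurableSet s → ∫ p in Prod.fst ⁻¹' s, g p ∂P = 0 := by
        intro s hs
        have h1 : ∫ p in Prod.fst ⁻¹' s, (p : γ × ℝ).2 ∂P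
            = ∫ x in s, u x ∂(P.map Prod.fst) := hcond s hs
        have h2 : ∫ p in Prod.fst ⁻¹' s, u (p : γ × ℝ).1 ∂P
            = ∫ x in s, u x ∂(P.map Prod.fst) := by
          rw [setIntegral_map hs (hum.aestronglyMeasurable) measurable_fst.aemeasurable]
        have hsndint : IntegrableOn (fun p : γ × ℝ => p.2) (Prod.fst ⁻¹' s) P :=
          (aux_integrable_of_bound measurable_snd.aestronglyMeasurable 1 hsnd).integrableOn
        have huint : IntegrableOn (fun p : γ × ℝ => u p.1) (Prod.fst ⁻¹' s) P :=
          (aux_integrable_of_bound (hum.comp measurable_fst).aestronglyMeasurable 1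
            (ae_of_all _ fun p => habs u hub p.1)).integrableOn
        calc ∫ p in Prod.fst ⁻¹' s, g p ∂P
            = ∫ p in Prod.fst ⁻¹' s, ((p : γ × ℝ).2 - u (p : γ × ℝ).1) ∂P := rfl
          _ = (∫ p in Prod.fst ⁻¹' s, (p : γ × ℝ).2 ∂P)
              - ∫ p in Prod.fst ⁻¹' s, u (p : γ × ℝ).1 ∂P := integral_sub hsndint huint
          _ = 0 := by rw [h1, h2, sub_self]
      have hzero : (fun _ : γ × ℝ => (0 : ℝ))
          =ᵐ[P] P[g|MeasurableSpace.comap (Prod.fst : γ × ℝ → γ) inferInstance] := by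
        refine ae_eq_condExp_of_forall_setIntegral_eq hm hgint
          (fun s _ _ => (integrable_zero _ _ _).integrableOn) ?_ ?_
        · rintro s ⟨s', hs', rfl⟩ _
          rw [hset s' hs']
          simp
        · exact StronglyMeasurable.aestronglyMeasurable
            (stronglyMeasurable_const :
              StronglyMeasurable[MeasurableSpace.comap (Prod.fst : γ × ℝ → γ) inferInstance]
                fun _ => (0 : ℝ))
      have hfstm : @Measurable (γ × ℝ) γ
          (MeasurableSpace.comap (Prod.fst : γ × ℝ → γ) inferInstance) _ Prod.fst :=
        fun s hs => ⟨s, hs, rfl⟩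
      have hφsm : StronglyMeasurable[MeasurableSpace.comap (Prod.fst : γ × ℝ → γ) inferInstance]
          (fun p : γ × ℝ => φ p.1) :=
        (hφm.comp hfstm).stronglyMeasurable
      have hpull : P[(fun p : γ × ℝ => φ p.1) * g|
            MeasurableSpace.comap (Prod.fst : γ × ℝ → γ) inferInstance]
          =ᵐ[P] (fun p : γ × ℝ => φ p.1)
            * P[g|MeasurableSpace.comap (Prod.fst : γ × ℝ → γ) inferInstance] :=
        condExp_mul_of_stronglyMeasurable_left hφsm hcrossint hgint
      have h3 : ∫ p, φ p.1 * g p ∂P = ∫ p, ((fun p : γ × ℝ => φ p.1)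
          * P[g|MeasurableSpace.comap (Prod.fst : γ × ℝ → γ) inferInstance]) p ∂P := by
        rw [show (fun p : γ × ℝ => φ p.1 * g p) = (fun p : γ × ℝ => φ p.1) * g from rfl,
          ← integral_condExp hm (f := (fun p : γ × ℝ => φ p.1) * g)]
        exact integral_congr_ae hpull
      rw [h3]
      have h4 : ((fun p : γ × ℝ => φ p.1)
          * P[g|MeasurableSpace.comap (Prod.fst : γ × ℝ → γ) inferInstance])
          =ᵐ[P] (fun _ => (0 : ℝ)) := by
        filter_upwards [hzero] with p hp
        simp [← hp]
      rw [integral_congr_ae h4, integral_const]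
      simp
    -- final bound
    unfold RiskG
    rw [← integral_sub (hLint f₁ hf₁ hb₁) (hLint f₂ hf₂ hb₂)]
    have hsplit : ∫ p, (A.indicator 1 p.1 * Lls p.2 (f₁ p.1)
        - A.indicator 1 p.1 * Lls p.2 (f₂ p.1)) ∂P = ∫ p, q p ∂P := by
      rw [show (fun p : γ × ℝ => A.indicator 1 p.1 * Lls p.2 (f₁ p.1)
          - A.indicator 1 p.1 * Lls p.2 (f₂ p.1)) = fun p => q p + φ p.1 * g p
          from funext hdecomp]
      rw [integral_add hqint hcrossint, hcross0, add_zero]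
    rw [hsplit]
    calc |∫ p, q p ∂P| ≤ ∫ p, |q p| ∂P := by
          simpa [Real.norm_eq_abs] using norm_integral_le_integral_norm (μ := P) (f := q)
      _ ≤ ∫ p, M * T.indicator 1 p ∂P := by
          refine integral_mono hqint.abs (((integrable_const (1 : ℝ)).indicator hTm).const_mul M)
            hqb
      _ = M * (P T).toReal := by rw [integral_const_mul, integral_indicator_one hTm, measureReal_def]
      _ = M * (P.map Prod.fst S).toReal := by rw [hmap]


end Pantry
end
end
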